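/- Let p(x_1,...,x_n) be the generating polynomial of a strongly Rayleigh distribution μ over a ground set {e_1,...,e_n} with E[multiplicity of e_i] = 1 for all i (equivalently ∇p(1) = 1). Then the coefficient p_1 of x_1 x_2 ··· x_n in p satisfies p_1 ≥ Π_{i=1}^n d_i(d_i−1)^{d_i−1}/d_i^{d_i}, where d_i is the maximum degree of x_i in p. -/

import Mathlib

open Finset

open Polynomial Metric

noncomputable section

def gg (d : ℕ) : ℝ := (d : ℝ) * ((d : ℝ) - 1) ^ (d - 1) / (d : ℝ) ^ d

lemma gg_eq {d : ℕ} (hd : 1 ≤ d) : gg d = (((d : ℝ) - 1) / d) ^ (d - 1) := by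
  obtain ⟨k, rfl⟩ : ∃ k, d = k + 1 := ⟨d - 1, (Nat.succ_pred_eq_of_pos hd).symm⟩
  have h : ((k : ℝ) + 1) ≠ 0 := by positivity
  simp only [gg, Nat.add_sub_cancel, div_pow]
  push_cast
  rw [pow_succ]
  field_simp

lemma gg_pos {d : ℕ} (hd : 1 ≤ d) : 0 < gg d := by
  rw [gg_eq hd]
  rcases eq_or_lt_of_le hd with h | h
  · simp [← h]
  · have h1 : (1 : ℝ) < d := by exact_mod_cast h
    have : (0:ℝ) < ((d:ℝ) - 1) / d := by
      apply div_pos <;> linarith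
    positivity

lemma gg_le_one {d : ℕ} (hd : 1 ≤ d) : gg d ≤ 1 := by
  rw [gg_eq hd]
  have h1 : (1 : ℝ) ≤ d := by exact_mod_cast hd
  apply pow_le_one₀
  · apply div_nonneg <;> linarith
  · rw [div_le_one (by linarith)]; linarith

lemma norm_pow_sub_pow (a b : ℂ) (M δ : ℝ) (n : ℕ) (hM : 1 ≤ M) (ha : ‖a‖ ≤ M) (hb : ‖b‖ ≤ M)
    (hab : ‖a - b‖ ≤ δ) : ‖a ^ n - b ^ n‖ ≤ n * M ^ n * δ := by
  have hδ : 0 ≤ δ := le_trans (norm_nonneg _) hab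
  rw [← geom_sum₂_mul a b n, norm_mul]
  have hsum : ‖∑ i ∈ Finset.range n, a ^ i * b ^ (n - 1 - i)‖ ≤ n * M ^ n := by
    calc ‖∑ i ∈ Finset.range n, a ^ i * b ^ (n - 1 - i)‖
        ≤ ∑ i ∈ Finset.range n, ‖a ^ i * b ^ (n - 1 - i)‖ := norm_sum_le _ _
      _ ≤ ∑ _i ∈ Finset.range n, M ^ n := by
          apply Finset.sum_le_sum
          intro i hi
          rw [norm_mul, norm_pow, norm_pow]
          calc ‖a‖ ^ i * ‖b‖ ^ (n - 1 - i) ≤ M ^ i * M ^ (n - 1 - i) := by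
                gcongr
            _ = M ^ (i + (n - 1 - i)) := (pow_add _ _ _).symm
            _ ≤ M ^ n := pow_le_pow_right₀ hM (by simp at hi; omega)
      _ = n * M ^ n := by simp [mul_comm]
  calc ‖∑ i ∈ Finset.range n, a ^ i * b ^ (n - 1 - i)‖ * ‖a - b‖ ≤ (n * M ^ n) * δ := by
        apply mul_le_mul hsum hab (norm_nonneg _)
        positivity

lemma norm_prod_pow_sub {ι : Type*} (a b : ι → ℂ) (k : ι → ℕ) (M δ : ℝ) (hM : 1 ≤ M)
    (hδ : 0 ≤ δ) :
    ∀ J : Finset ι, (∀ i ∈ J, ‖a i‖ ≤ M) → (∀ i ∈ J, ‖b i‖ ≤ M) →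
      (∀ i ∈ J, ‖a i - b i‖ ≤ δ) →
      ‖∏ i ∈ J, a i ^ k i - ∏ i ∈ J, b i ^ k i‖
        ≤ (∑ i ∈ J, (k i : ℝ)) * M ^ (∑ i ∈ J, k i) * δ := by
  classical
  intro J
  induction J using Finset.induction_on with
  | empty => simp
  | @insert j s hj ih =>
    intro ha hb hab
    have hM0 : (0:ℝ) ≤ M := le_trans zero_le_one hM
    have haj := ha j (Finset.mem_insert_self j s)
    have hbj := hb j (Finset.mem_insert_self j s)
    have habj := hab j (Finset.mem_insert_self j s)
    have ha' : ∀ i ∈ s, ‖a i‖ ≤ M := fun i hi => ha i (Finset.mem_insert_of_mem hi)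
    have hb' : ∀ i ∈ s, ‖b i‖ ≤ M := fun i hi => hb i (Finset.mem_insert_of_mem hi)
    have hab' : ∀ i ∈ s, ‖a i - b i‖ ≤ δ := fun i hi => hab i (Finset.mem_insert_of_mem hi)
    have ihs := ih ha' hb' hab'
    rw [Finset.prod_insert hj, Finset.prod_insert hj, Finset.sum_insert hj,
      Finset.sum_insert hj]
    have key : a j ^ k j * ∏ i ∈ s, a i ^ k i - b j ^ k j * ∏ i ∈ s, b i ^ k i
        = a j ^ k j * (∏ i ∈ s, a i ^ k i - ∏ i ∈ s, b i ^ k i)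
          + (a j ^ k j - b j ^ k j) * ∏ i ∈ s, b i ^ k i := by ring
    rw [key]
    have hprodb : ‖∏ i ∈ s, b i ^ k i‖ ≤ M ^ (∑ i ∈ s, k i) := by
      rw [norm_prod]
      calc ∏ i ∈ s, ‖b i ^ k i‖ ≤ ∏ i ∈ s, M ^ k i := by
            apply Finset.prod_le_prod
            · intro i _; positivity
            · intro i hi; rw [norm_pow]; exact pow_le_pow_left₀ (norm_nonneg _) (hb' i hi) _
        _ = M ^ (∑ i ∈ s, k i) := by rw [Finset.prod_pow_eq_pow_sum]
    have h1 : ‖a j ^ k j * (∏ i ∈ s, a i ^ k i - ∏ i ∈ s, b i ^ k i)‖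
        ≤ M ^ k j * ((∑ i ∈ s, (k i : ℝ)) * M ^ (∑ i ∈ s, k i) * δ) := by
      rw [norm_mul, norm_pow]
      apply mul_le_mul (pow_le_pow_left₀ (norm_nonneg _) haj _) ihs (norm_nonneg _)
      positivity
    have h2 : ‖(a j ^ k j - b j ^ k j) * ∏ i ∈ s, b i ^ k i‖
        ≤ ((k j : ℝ) * M ^ k j * δ) * M ^ (∑ i ∈ s, k i) := by
      rw [norm_mul]
      exact mul_le_mul (norm_pow_sub_pow (a j) (b j) M δ (k j) hM haj hbj habj) hprodb
        (norm_nonneg _) (by positivity)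
    calc ‖a j ^ k j * (∏ i ∈ s, a i ^ k i - ∏ i ∈ s, b i ^ k i)
          + (a j ^ k j - b j ^ k j) * ∏ i ∈ s, b i ^ k i‖
        ≤ ‖a j ^ k j * (∏ i ∈ s, a i ^ k i - ∏ i ∈ s, b i ^ k i)‖
          + ‖(a j ^ k j - b j ^ k j) * ∏ i ∈ s, b i ^ k i‖ := norm_add_le _ _
      _ ≤ M ^ k j * ((∑ i ∈ s, (k i : ℝ)) * M ^ (∑ i ∈ s, k i) * δ)
          + ((k j : ℝ) * M ^ k j * δ) * M ^ (∑ i ∈ s, k i) := add_le_add h1 h2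
      _ = ((k j : ℝ) + ∑ i ∈ s, (k i : ℝ)) * M ^ (k j + ∑ i ∈ s, k i) * δ := by
          rw [pow_add]; ring

lemma hurwitz_at (G : Polynomial ℂ) (hG : G ≠ 0) (ρ : ℝ) (hρ : 0 < ρ)
    (happrox : ∀ δ : ℝ, 0 < δ → ∃ g : Polynomial ℂ,
      (∀ u : ℂ, ‖u‖ ≤ ρ → g.eval u ≠ 0) ∧ (∀ u : ℂ, ‖u‖ ≤ ρ → ‖g.eval u - G.eval u‖ ≤ δ)) :
    G.eval 0 ≠ 0 := by
  -- pick a radius avoiding the root norms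
  obtain ⟨r, hrI, hrN⟩ : ∃ r ∈ Set.Ioc (0:ℝ) ρ,
      r ∉ (G.roots.map (fun z => ‖z‖)).toFinset := by
    have : (Set.Ioc (0:ℝ) ρ).Infinite := Set.Ioc_infinite hρ
    obtain ⟨r, hr1, hr2⟩ := this.exists_notMem_finset (G.roots.map (fun z => ‖z‖)).toFinset
    exact ⟨r, hr1, hr2⟩
  obtain ⟨hr0, hrρ⟩ := hrI
  -- the minimum of ‖G.eval‖ on the sphere of radius r
  obtain ⟨u0, hu0s, hu0min⟩ : ∃ u0 ∈ sphere (0:ℂ) r, IsMinOn (fun u => ‖G.eval u‖)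
      (sphere (0:ℂ) r) u0 := by
    apply (isCompact_sphere (0:ℂ) r).exists_isMinOn
    · exact NormedSpace.sphere_nonempty.mpr hr0.le
    · exact (G.continuous.norm).continuousOn
  set m := ‖G.eval u0‖ with hm_def
  have hm : 0 < m := by
    rcases eq_or_lt_of_le (norm_nonneg (G.eval u0)) with h | h
    · exfalso
      apply hrN
      have hroot : u0 ∈ G.roots := by
        rw [Polynomial.mem_roots hG]
        exact (norm_eq_zero.mp h.symm)
      have : ‖u0‖ = r := by simpa using hu0s
      rw [Multiset.mem_toFinset]
      exact Multiset.mem_map.mpr ⟨u0, hroot, this⟩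
    · exact h
  obtain ⟨g, hg0, hgG⟩ := happrox (m/3) (by positivity)
  -- bound on the sphere
  have hsphere : ∀ u ∈ sphere (0:ℂ) r, 2*m/3 ≤ ‖g.eval u‖ := by
    intro u hu
    have hur : ‖u‖ = r := by simpa using hu
    have h1 : m ≤ ‖G.eval u‖ := hu0min hu
    have h2 : ‖g.eval u - G.eval u‖ ≤ m/3 := hgG u (by rw [hur]; exact hrρ)
    have := norm_sub_norm_le (g.eval u) (G.eval u)
    have h3 : ‖G.eval u‖ - ‖g.eval u‖ ≤ m/3 := by
      have := norm_sub_norm_le (G.eval u) (g.eval u)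
      rw [norm_sub_rev] at h2
      linarith
    linarith
  -- maximum modulus for 1/g on the ball of radius r
  have hgne : ∀ u : ℂ, ‖u‖ ≤ r → g.eval u ≠ 0 := fun u hu => hg0 u (le_trans hu hrρ)
  have hinv : ‖(g.eval (0:ℂ))⁻¹‖ ≤ (2*m/3)⁻¹ := by
    have := Complex.norm_le_of_forall_mem_frontier_norm_le (U := ball (0:ℂ) r)
      (f := fun u : ℂ => (g.eval u)⁻¹) (C := (2*m/3)⁻¹) (z := (0:ℂ)) isBounded_ball ?_ ?_ ?_
    · exact this
    · constructor
      · intro u hu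
        have hur : ‖u‖ ≤ r := by
          have := mem_ball_iff_norm.mp hu
          simpa using this.le
        exact ((g.differentiable.differentiableAt).inv (hgne u hur)).differentiableWithinAt
      · rw [closure_ball (0:ℂ) hr0.ne']
        apply ContinuousOn.inv₀ (g.continuous.continuousOn)
        intro u hu
        exact hgne u (by simpa using hu)
    · intro u hu
      rw [frontier_ball (0:ℂ) hr0.ne'] at hu
      rw [norm_inv]
      exact inv_anti₀ (by positivity) (hsphere u hu)
    · rw [closure_ball (0:ℂ) hr0.ne']
      exact mem_closedBall_self hr0.le
  have hg0' : g.eval 0 ≠ 0 := hgne (0:ℂ) (by rw [norm_zero]; exact hr0.le)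
  have hg0norm : 2*m/3 ≤ ‖g.eval (0:ℂ)‖ := by
    rw [norm_inv] at hinv
    have h1 : 0 < ‖g.eval (0:ℂ)‖ := norm_pos_iff.mpr hg0'
    have h2 : 0 < 2*m/3 := by positivity
    rwa [inv_le_inv₀ h1 h2] at hinv
  have hG0 : ‖g.eval (0:ℂ) - G.eval 0‖ ≤ m/3 := hgG (0:ℂ) (by rw [norm_zero]; exact hρ.le)
  intro hzero
  rw [hzero, sub_zero] at hG0
  linarith

lemma deriv_multiset_prod_eval {K : Type*} [Field K] (t : K) :
    ∀ (m : Multiset K), (∀ r ∈ m, t - r ≠ 0) →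
    (Polynomial.derivative (m.map (fun r => X - C r)).prod).eval t
      = ((m.map (fun r => X - C r)).prod).eval t * (m.map (fun r => (t - r)⁻¹)).sum := by
  intro m
  induction m using Multiset.induction_on with
  | empty => simp
  | cons a s ih =>
    intro h
    have ha : t - a ≠ 0 := h a (Multiset.mem_cons_self a s)
    have hs : ∀ r ∈ s, t - r ≠ 0 := fun r hr => h r (Multiset.mem_cons_of_mem hr)
    simp only [Multiset.map_cons, Multiset.prod_cons, Multiset.sum_cons, derivative_mul,
      derivative_sub, derivative_X, derivative_C, sub_zero, eval_add, eval_mul, eval_one,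
      eval_sub, eval_X, eval_C, one_mul]
    rw [ih hs]
    field_simp

lemma list_prod_map_getD (f : ℝ → ℝ) : ∀ l : List ℝ,
    (l.map f).prod = ∏ i ∈ Finset.range l.length, f (l.getD i 0)
  | [] => by simp
  | x :: l => by
    rw [List.map_cons, List.prod_cons, List.length_cons, Finset.prod_range_succ',
      list_prod_map_getD f l]
    simp [mul_comm]

lemma list_sum_map_getD (f : ℝ → ℝ) : ∀ l : List ℝ,
    (l.map f).sum = ∑ i ∈ Finset.range l.length, f (l.getD i 0)
  | [] => by simp
  | x :: l => by
    rw [List.map_cons, List.sum_cons, List.length_cons, Finset.sum_range_succ',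
      list_sum_map_getD f l]
    simp [add_comm]

lemma amgm_multiset (m : Multiset ℝ) (D : ℕ) (hD : 0 < D) (hcard : Multiset.card m ≤ D)
    (h0 : ∀ y ∈ m, 0 ≤ y) :
    (m.map fun y => 1 + y).prod ≤ (1 + m.sum / D) ^ D := by
  obtain ⟨l, rfl⟩ : ∃ l : List ℝ, (l : Multiset ℝ) = m := ⟨m.toList, Multiset.coe_toList m⟩
  rw [Multiset.map_coe, Multiset.prod_coe, Multiset.sum_coe]
  rw [Multiset.coe_card] at hcard
  have h0' : ∀ y ∈ l, (0:ℝ) ≤ y := fun y hy => h0 y (by exact_mod_cast hy)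
  set k := l.length with hk
  set Z : ℕ → ℝ := fun j => if j < k then 1 + l.getD j 0 else 1 with hZ
  have hZnn : ∀ j, 0 ≤ Z j := by
    intro j
    rw [hZ]
    by_cases h : j < k
    · simp only [if_pos h]
      have : l.getD j 0 ∈ l := by
        rw [List.getD_eq_getElem l 0 h]
        exact List.getElem_mem _
      have := h0' _ this
      linarith
    · simp [if_neg h]
  have hgm := Real.geom_mean_le_arith_mean_weighted (Finset.range D)
    (fun _ => (D:ℝ)⁻¹) Z (fun i _ => by positivity)
    (by
      rw [Finset.sum_const, Finset.card_range, nsmul_eq_mul]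
      field_simp)
    (fun i _ => hZnn i)
  have hsplit : D = k + (D - k) := by omega
  have hZprod : ∏ j ∈ Finset.range D, Z j = (l.map fun y => 1 + y).prod := by
    rw [hsplit, Finset.prod_range_add]
    have h1 : ∏ i ∈ Finset.range k, Z i = (l.map fun y => 1 + y).prod := by
      rw [list_prod_map_getD]
      apply Finset.prod_congr rfl
      intro i hi
      rw [hZ]
      simp only [if_pos (Finset.mem_range.mp hi)]
    have h2 : ∏ i ∈ Finset.range (D - k), Z (k + i) = 1 := by
      apply Finset.prod_eq_one
      intro i _
      rw [hZ]
      simp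
    rw [h1, h2, mul_one]
  have hZsum : ∑ j ∈ Finset.range D, Z j = D + l.sum := by
    rw [hsplit, Finset.sum_range_add]
    have h1 : ∑ i ∈ Finset.range k, Z i = k + l.sum := by
      have : ∀ i ∈ Finset.range k, Z i = 1 + l.getD i 0 := by
        intro i hi
        rw [hZ]; simp only [if_pos (Finset.mem_range.mp hi)]
      rw [Finset.sum_congr rfl this, Finset.sum_add_distrib]
      have : (l.map fun y => (1:ℝ) + y).sum = ∑ i ∈ Finset.range k, (1 + l.getD i 0) :=
        list_sum_map_getD _ l
      have hid : (l.map fun y : ℝ => y).sum = ∑ i ∈ Finset.range k, l.getD i 0 :=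
        list_sum_map_getD (fun y => y) l
      simp only [List.map_id'] at hid
      rw [← hid]
      simp [Finset.sum_const, Finset.card_range]
    have h2 : ∑ i ∈ Finset.range (D - k), Z (k + i) = (D - k : ℕ) := by
      have : ∀ i ∈ Finset.range (D - k), Z (k + i) = 1 := by
        intro i _; rw [hZ]; simp
      rw [Finset.sum_congr rfl this]
      simp
    rw [h1, h2]
    push_cast [Nat.cast_sub hcard]
    ring
  have hprod_nn : 0 ≤ ∏ j ∈ Finset.range D, Z j := Finset.prod_nonneg fun i _ => hZnn i
  have hlhs : (∏ j ∈ Finset.range D, Z j) ^ ((D:ℝ)⁻¹) ≤ 1 + l.sum / D := by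
    have heq : ∏ j ∈ Finset.range D, Z j ^ ((D:ℝ)⁻¹)
        = (∏ j ∈ Finset.range D, Z j) ^ ((D:ℝ)⁻¹) :=
      Real.finset_prod_rpow (Finset.range D) Z (fun i _ => hZnn i) _
    rw [← heq]
    calc ∏ j ∈ Finset.range D, Z j ^ ((D:ℝ)⁻¹) ≤ ∑ j ∈ Finset.range D, (D:ℝ)⁻¹ * Z j := hgm
      _ = (D:ℝ)⁻¹ * ∑ j ∈ Finset.range D, Z j := by rw [Finset.mul_sum]
      _ = 1 + l.sum / D := by
          rw [hZsum]
          have hD0 : (D:ℝ) ≠ 0 := by positivity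
          field_simp
  have final : ∏ j ∈ Finset.range D, Z j ≤ (1 + l.sum / D) ^ D := by
    have h1 : ((∏ j ∈ Finset.range D, Z j) ^ ((D:ℝ)⁻¹)) ^ D ≤ (1 + l.sum / D) ^ D := by
      apply pow_le_pow_left₀ (Real.rpow_nonneg hprod_nn _) hlhs
    rwa [Real.rpow_inv_natCast_pow hprod_nn (by omega)] at h1
  rw [← hZprod]
  exact final

lemma real_rooted_factorization (f : Polynomial ℝ) (hf : f ≠ 0)
    (him : ∀ z : ℂ, (f.map (algebraMap ℝ ℂ)).eval z = 0 → z.im = 0) :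
    ∃ m : Multiset ℝ, Multiset.card m = f.natDegree ∧
      f = C f.leadingCoeff * (m.map fun r => X - C r).prod ∧
      ∀ r ∈ m, f.eval r = 0 := by
  set F := f.map (algebraMap ℝ ℂ) with hF_def
  have hinj : Function.Injective (algebraMap ℝ ℂ) := (algebraMap ℝ ℂ).injective
  have hF : F ≠ 0 := by
    intro h
    exact hf ((Polynomial.map_eq_zero_iff hinj).mp h)
  have hsplit : Splits F := IsAlgClosed.splits F
  have heqF : F = C F.leadingCoeff * (F.roots.map fun a => X - C a).prod :=
    hsplit.eq_prod_roots
  have hre : ∀ z ∈ F.roots, ((z.re : ℝ) : ℂ) = z := by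
    intro z hz
    have hz0 : F.eval z = 0 := (Polynomial.mem_roots hF).mp hz
    have : z.im = 0 := him z hz0
    exact Complex.ext (by simp) (by simp [this])
  have hevF : ∀ u : ℝ, F.eval (u:ℂ) = ((f.eval u : ℝ) : ℂ) := by
    intro u
    rw [hF_def, Polynomial.eval_map]
    exact Polynomial.eval₂_at_apply (algebraMap ℝ ℂ) u
  refine ⟨F.roots.map Complex.re, ?_, ?_, ?_⟩
  · rw [Multiset.card_map]
    have h1 : F.natDegree = Multiset.card F.roots := by
      exact hsplit.natDegree_eq_card_roots
    rw [← h1, hF_def, Polynomial.natDegree_map]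
  · apply Polynomial.map_injective (algebraMap ℝ ℂ) hinj
    rw [Polynomial.map_mul, Polynomial.map_C, Polynomial.map_multiset_prod]
    rw [Multiset.map_map, Multiset.map_map]
    have hmap : F.roots.map ((Polynomial.map (algebraMap ℝ ℂ) ∘ fun r : ℝ => X - C r) ∘ Complex.re)
        = F.roots.map fun a => X - C a := by
      apply Multiset.map_congr rfl
      intro z hz
      simp only [Function.comp_apply, Polynomial.map_sub, Polynomial.map_X, Polynomial.map_C]
      rw [show (algebraMap ℝ ℂ) z.re = ((z.re : ℝ) : ℂ) from rfl, hre z hz]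
    rw [hmap]
    have hlc : (algebraMap ℝ ℂ) f.leadingCoeff = F.leadingCoeff := by
      rw [hF_def, Polynomial.leadingCoeff_map]
    rw [hlc, ← heqF]
  · intro r hr
    obtain ⟨z, hz, hzr⟩ := Multiset.mem_map.mp hr
    have hz0 : F.eval z = 0 := (Polynomial.mem_roots hF).mp hz
    have : ((r:ℝ):ℂ) = z := by rw [← hzr]; exact hre z hz
    rw [← this] at hz0
    rw [hevF r] at hz0
    exact_mod_cast hz0

lemma univar (D : ℕ) (hD : 1 ≤ D) (f : Polynomial ℝ) (h0 : ∀ k, 0 ≤ f.coeff k)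
    (hdeg : f.natDegree ≤ D)
    (hstab : ∀ z : ℂ, 0 < z.im → (f.map (algebraMap ℝ ℂ)).eval z ≠ 0)
    (Cc : ℝ) (hC : 0 ≤ Cc) (hb : ∀ s : ℝ, 0 < s → Cc * s ≤ f.eval s) :
    gg D * Cc ≤ f.coeff 1 := by
  have hf : f ≠ 0 := by
    intro h
    exact hstab Complex.I (by simp) (by simp [h])
  have ev_ge : ∀ s : ℝ, 0 ≤ s → f.coeff 0 ≤ f.eval s := by
    intro s hs
    rw [Polynomial.eval_eq_sum_range, Finset.sum_range_succ']
    simp only [pow_zero, mul_one]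
    have : 0 ≤ ∑ i ∈ Finset.range f.natDegree, f.coeff (i+1) * s^(i+1) :=
      Finset.sum_nonneg fun i _ => mul_nonneg (h0 _) (by positivity)
    linarith
  rcases eq_or_lt_of_le hD with hD1 | hD2
  · -- D = 1
    have hgg : gg D = 1 := by rw [← hD1]; norm_num [gg]
    rw [hgg, one_mul]
    by_contra hlt
    push_neg at hlt
    have ha0 : 0 ≤ f.coeff 0 := h0 0
    set s : ℝ := (f.coeff 0 + 1) / (Cc - f.coeff 1) with hs_def
    have hspos : 0 < s := by apply div_pos <;> linarith
    have hev : f.eval s = f.coeff 0 + f.coeff 1 * s := by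
      rw [Polynomial.eval_eq_sum_range' (show f.natDegree < 2 by omega)]
      rw [Finset.sum_range_succ, Finset.sum_range_one]
      ring
    have hbs := hb s hspos
    rw [hev] at hbs
    have hne : Cc - f.coeff 1 ≠ 0 := by linarith
    have hCs : (Cc - f.coeff 1) * s = f.coeff 0 + 1 := by
      rw [hs_def]
      field_simp
    nlinarith
  · -- 2 ≤ D
    have hD2' : (2:ℝ) ≤ (D:ℝ) := by exact_mod_cast hD2
    rcases eq_or_lt_of_le (h0 0) with ha0 | ha0
    · -- coeff 0 = 0
      obtain ⟨q, hq⟩ : X ∣ f := Polynomial.X_dvd_iff.mpr ha0.symm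
      have hc1q : f.coeff 1 = q.coeff 0 := by rw [hq]; exact Polynomial.coeff_X_mul q 0
      have hCle : ∀ s : ℝ, 0 < s → Cc ≤ q.eval s := by
        intro s hs
        have := hb s hs
        rw [hq, Polynomial.eval_mul, Polynomial.eval_X] at this
        have h2 : Cc * s ≤ q.eval s * s := by linarith [this, mul_comm s (q.eval s)]
        exact le_of_mul_le_mul_right h2 hs
      have hc0 : Cc ≤ q.eval 0 := by
        have hcont : Filter.Tendsto (fun s : ℝ => q.eval s) (nhdsWithin 0 (Set.Ioi 0))
            (nhds (q.eval 0)) := (q.continuous.tendsto 0).mono_left nhdsWithin_le_nhds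
        refine ge_of_tendsto hcont ?_
        filter_upwards [self_mem_nhdsWithin] with s hs
        exact hCle s hs
      rw [← Polynomial.coeff_zero_eq_eval_zero] at hc0
      rw [hc1q]
      nlinarith [gg_le_one hD, gg_pos hD]
    · -- 0 < coeff 0
      rcases Nat.eq_zero_or_pos f.natDegree with hk0 | hk1
      · -- constant
        have hev : ∀ s : ℝ, f.eval s = f.coeff 0 := by
          intro s
          rw [Polynomial.eval_eq_sum_range' (show f.natDegree < 1 by omega),
            Finset.sum_range_one]
          simp
        have hC0 : Cc = 0 := by
          by_contra hne
          have hCpos : 0 < Cc := lt_of_le_of_ne hC (Ne.symm hne)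
          have hs : (0:ℝ) < (f.coeff 0 + 1) / Cc := by apply div_pos <;> linarith
          have := hb _ hs
          rw [hev] at this
          rw [mul_div_cancel₀ _ (ne_of_gt hCpos)] at this
          linarith
        rw [hC0, mul_zero]
        exact h0 1
      · -- main case
        have him : ∀ z : ℂ, (f.map (algebraMap ℝ ℂ)).eval z = 0 → z.im = 0 := by
          intro z hz
          by_contra hne
          rcases lt_or_gt_of_ne hne with hlt | hgt
          · have haev : ∀ u : ℂ, (Polynomial.aeval u) f = (f.map (algebraMap ℝ ℂ)).eval u := by
              intro u
              rw [Polynomial.aeval_def, Polynomial.eval_map]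
            apply hstab ((starRingEnd ℂ) z) (by simpa using hlt)
            rw [← haev, Polynomial.aeval_conj, haev, hz, map_zero]
          · exact hstab z hgt hz
        obtain ⟨m, hcard, heq, hev0⟩ := real_rooted_factorization f hf him
        have hneg : ∀ r ∈ m, r < 0 := by
          intro r hr
          rcases lt_or_ge r 0 with h | h
          · exact h
          · exfalso
            have h1 := ev_ge r h
            have h2 := hev0 r hr
            linarith
        have ha : 0 < f.leadingCoeff :=
          lt_of_le_of_ne (h0 _) (Ne.symm (Polynomial.leadingCoeff_ne_zero.mpr hf))
        set T := (m.map fun r => (-r)⁻¹).sum with hT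
        have hTpos : 0 < T := by
          have hm0 : m ≠ 0 := by
            intro h
            rw [h] at hcard
            simp at hcard
            omega
          obtain ⟨r0, hr0⟩ := Multiset.exists_mem_of_ne_zero hm0
          have hmem : (-r0)⁻¹ ∈ m.map fun r => (-r)⁻¹ := Multiset.mem_map_of_mem _ hr0
          have hnn : ∀ x ∈ m.map fun r => (-r)⁻¹, (0:ℝ) ≤ x := by
            intro x hx
            obtain ⟨r, hr, rfl⟩ := Multiset.mem_map.mp hx
            exact le_of_lt (inv_pos.mpr (by linarith [hneg r hr]))
          have h1 : (-r0)⁻¹ ≤ T := Multiset.single_le_sum hnn _ hmem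
          have h2 : (0:ℝ) < (-r0)⁻¹ := inv_pos.mpr (by linarith [hneg r0 hr0])
          linarith
        have evalid : ∀ s : ℝ, f.eval s = f.leadingCoeff * (m.map fun r => s - r).prod := by
          intro s
          conv_lhs => rw [heq]
          rw [Polynomial.eval_mul, Polynomial.eval_C, Polynomial.eval_multiset_prod,
            Multiset.map_map]
          simp [Function.comp]
        have ha0eq : f.coeff 0 = f.leadingCoeff * (m.map fun r => -r).prod := by
          rw [Polynomial.coeff_zero_eq_eval_zero, evalid 0]
          congr 2
          apply Multiset.map_congr rfl
          intro r _
          ring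
        have hc1 : f.coeff 1 = f.coeff 0 * T := by
          have h1 : f.coeff 1 = (Polynomial.derivative f).eval 0 := by
            rw [← Polynomial.coeff_zero_eq_eval_zero, Polynomial.coeff_derivative]
            norm_num
          have hder : Polynomial.derivative f
              = C f.leadingCoeff * Polynomial.derivative ((m.map fun r => X - C r).prod) := by
            conv_lhs => rw [heq]
            rw [Polynomial.derivative_mul, Polynomial.derivative_C]
            simp
          have hne0 : ∀ r ∈ m, (0:ℝ) - r ≠ 0 := by
            intro r hr
            have := hneg r hr
            intro hcon
            linarith [hcon]
          rw [h1, hder, Polynomial.eval_mul, Polynomial.eval_C,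
            deriv_multiset_prod_eval 0 m hne0]
          have hPz : ((m.map fun r => X - C r).prod).eval 0 = (m.map fun r => -r).prod := by
            rw [Polynomial.eval_multiset_prod, Multiset.map_map]
            congr 1
            apply Multiset.map_congr rfl
            intro r _
            simp
          have hSz : (m.map fun r => ((0:ℝ) - r)⁻¹).sum = T := by
            rw [hT]
            congr 1
            apply Multiset.map_congr rfl
            intro r _
            rw [zero_sub]
          rw [hPz, hSz, ha0eq]
          ring
        clear_value T
        -- the optimal point
        have hDm1 : (1:ℝ) ≤ (D:ℝ) - 1 := by linarith
        have hDne : (D:ℝ) ≠ 0 := by linarith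
        have hD1ne : (D:ℝ) - 1 ≠ 0 := by linarith
        have hTne : T ≠ 0 := ne_of_gt hTpos
        obtain ⟨s₀, hs₀⟩ : ∃ s₀ : ℝ, s₀ = (D:ℝ) / (((D:ℝ) - 1) * T) := ⟨_, rfl⟩
        have hs₀pos : 0 < s₀ := by
          rw [hs₀]
          exact div_pos (by linarith) (mul_pos (by linarith) hTpos)
        have hsT : s₀ * T = (D:ℝ) / ((D:ℝ) - 1) := by
          rw [hs₀]
          field_simp
        -- AM-GM
        have hcardm : Multiset.card m ≤ D := hcard ▸ hdeg
        have hkey := amgm_multiset (m.map fun r => s₀ * (-r)⁻¹) D (by omega)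
          (by rwa [Multiset.card_map])
          (by
            intro y hy
            obtain ⟨r, hr, rfl⟩ := Multiset.mem_map.mp hy
            exact mul_nonneg hs₀pos.le (le_of_lt (inv_pos.mpr (by linarith [hneg r hr]))))
        rw [Multiset.map_map] at hkey
        simp only [Function.comp_def] at hkey
        have hsum : ((m.map fun r => s₀ * (-r)⁻¹)).sum = s₀ * T := by
          rw [hT]
          exact Multiset.sum_map_mul_left
        rw [hsum] at hkey
        have hbase : 1 + s₀ * T / (D:ℝ) = (D:ℝ) / ((D:ℝ) - 1) := by
          rw [hsT]
          field_simp
          ring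
        rw [hbase] at hkey
        -- factor the evaluation
        have hfact : f.eval s₀ = f.coeff 0 * (m.map fun r => 1 + s₀ * (-r)⁻¹).prod := by
          rw [evalid s₀, ha0eq, mul_assoc, ← Multiset.prod_map_mul]
          congr 2
          apply Multiset.map_congr rfl
          intro r hr
          have hrne : (-r) ≠ 0 := by have := hneg r hr; intro hcon; linarith [neg_eq_zero.mp hcon]
          rw [mul_add, mul_one,
            show (-r) * (s₀ * (-r)⁻¹) = s₀ * ((-r) * (-r)⁻¹) by ring,
            mul_inv_cancel₀ hrne, mul_one]
          ring
        have hABound : f.eval s₀ ≤ f.coeff 0 * ((D:ℝ)/((D:ℝ)-1))^D := by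
          rw [hfact]
          exact mul_le_mul_of_nonneg_left hkey ha0.le
        -- final algebra
        have hx1 : (((D:ℝ)-1)/(D:ℝ)) * ((D:ℝ)/((D:ℝ)-1)) = 1 := by
          field_simp
        have hpows : ((((D:ℝ)-1)/(D:ℝ))^(D-1)) * (((D:ℝ)/((D:ℝ)-1))^(D-1)) = 1 := by
          rw [← mul_pow, hx1, one_pow]
        have hpowD : ((D:ℝ)/((D:ℝ)-1))^D = ((D:ℝ)/((D:ℝ)-1))^(D-1) * ((D:ℝ)/((D:ℝ)-1)) := by
          rw [← pow_succ]
          congr 1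
          omega
        have step1 : gg D * Cc * s₀ ≤ gg D * (f.coeff 0 * (((D:ℝ))/((D:ℝ)-1))^D) := by
          rw [mul_assoc]
          apply mul_le_mul_of_nonneg_left _ (gg_pos hD).le
          calc Cc * s₀ ≤ f.eval s₀ := hb _ hs₀pos
            _ ≤ f.coeff 0 * ((D:ℝ)/((D:ℝ)-1))^D := hABound
        have step2 : gg D * (f.coeff 0 * (((D:ℝ))/((D:ℝ)-1))^D)
            = f.coeff 0 * ((D:ℝ)/((D:ℝ)-1)) := by
          rw [gg_eq hD, hpowD]
          calc (((D:ℝ)-1)/(D:ℝ))^(D-1) * (f.coeff 0 * (((D:ℝ)/((D:ℝ)-1))^(D-1) * ((D:ℝ)/((D:ℝ)-1))))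
              = f.coeff 0 * ((D:ℝ)/((D:ℝ)-1)) * ((((D:ℝ)-1)/(D:ℝ))^(D-1) * (((D:ℝ)/((D:ℝ)-1))^(D-1))) := by ring
            _ = f.coeff 0 * ((D:ℝ)/((D:ℝ)-1)) := by rw [hpows, mul_one]
        have step3 : f.coeff 0 * ((D:ℝ)/((D:ℝ)-1)) = f.coeff 0 * T * s₀ := by
          rw [← hsT]
          ring
        have : gg D * Cc * s₀ ≤ f.coeff 0 * T * s₀ := by
          rw [← step3, ← step2]
          exact step1
        have hfin : gg D * Cc ≤ f.coeff 0 * T := le_of_mul_le_mul_right this hs₀pos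
        rwa [← hc1] at hfin

lemma prod_if_insert {ι R : Type*} [CommMonoid R] [DecidableEq ι] {J' : Finset ι} {n : ι}
    (hn : n ∉ J') (t : R) (y : ι → R) (k : ι → ℕ) :
    ∏ i ∈ insert n J', (if i = n then t else y i) ^ k i = t ^ k n * ∏ i ∈ J', y i ^ k i := by
  rw [Finset.prod_insert hn, if_pos rfl]
  congr 1
  apply Finset.prod_congr rfl
  intro i hi
  rw [if_neg (by rintro rfl; exact hn hi)]

lemma prod_pow_norm_le {ι : Type*} (J : Finset ι) (w : ι → ℂ) (k : ι → ℕ) (M : ℝ) (hM : 1 ≤ M)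
    (h : ∀ i ∈ J, ‖w i‖ ≤ M) : ‖∏ i ∈ J, w i ^ k i‖ ≤ M ^ (∑ i ∈ J, k i) := by
  rw [norm_prod]
  calc ∏ i ∈ J, ‖w i ^ k i‖ ≤ ∏ i ∈ J, M ^ k i := by
        apply Finset.prod_le_prod
        · intro i _; positivity
        · intro i hi; rw [norm_pow]; exact pow_le_pow_left₀ (norm_nonneg _) (h i hi) _
    _ = M ^ (∑ i ∈ J, k i) := by rw [Finset.prod_pow_eq_pow_sum]

lemma exists_rho {ι : Type*} (J' : Finset ι) (hne : J'.Nonempty) (z0 e : ι → ℂ)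
    (him : ∀ i ∈ J', 0 < (z0 i).im) :
    ∃ ρ : ℝ, 0 < ρ ∧ ∀ u : ℂ, ‖u‖ ≤ ρ → ∀ i ∈ J', 0 < (z0 i + u * e i).im := by
  classical
  set ρ := J'.inf' hne (fun i => (z0 i).im / (2 * (1 + ‖e i‖))) with hρ_def
  have hρpos : 0 < ρ := by
    rw [hρ_def, Finset.lt_inf'_iff]
    intro i hi
    exact div_pos (him i hi) (by positivity)
  refine ⟨ρ, hρpos, ?_⟩
  intro u hu i hi
  have h1 : ρ ≤ (z0 i).im / (2 * (1 + ‖e i‖)) := Finset.inf'_le _ hi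
  have h2 : ‖u * e i‖ ≤ ρ * (1 + ‖e i‖) := by
    rw [norm_mul]
    apply mul_le_mul hu (by linarith [norm_nonneg (e i)]) (norm_nonneg _) hρpos.le
  have h3 : ρ * (1 + ‖e i‖) ≤ (z0 i).im / 2 := by
    have hpos : (0:ℝ) < 1 + ‖e i‖ := by positivity
    calc ρ * (1 + ‖e i‖) ≤ ((z0 i).im / (2 * (1 + ‖e i‖))) * (1 + ‖e i‖) := by
          apply mul_le_mul_of_nonneg_right h1 hpos.le
      _ = (z0 i).im / 2 := by field_simp
  have h4 : |(u * e i).im| ≤ ‖u * e i‖ := Complex.abs_im_le_norm _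
  have h5 : -((z0 i).im / 2) ≤ (u * e i).im := by
    have := neg_abs_le (u * e i).im
    linarith
  have h6 := him i hi
  rw [Complex.add_im]
  linarith

lemma multiset_sum_neg : ∀ m : Multiset ℝ, m ≠ 0 → (∀ x ∈ m, x < 0) → m.sum < 0 := by
  intro m
  induction m using Multiset.induction_on with
  | empty => intro h; exact absurd rfl h
  | cons a s ih =>
    intro _ hneg
    rw [Multiset.sum_cons]
    have ha : a < 0 := hneg a (Multiset.mem_cons_self a s)
    rcases eq_or_ne s 0 with rfl | hs
    · simpa using ha
    · have := ih hs (fun x hx => hneg x (Multiset.mem_cons_of_mem hx))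
      linarith

lemma glucas (f : Polynomial ℂ) (hdeg : 1 ≤ f.natDegree)
    (hnv : ∀ z : ℂ, 0 < z.im → f.eval z ≠ 0) (t : ℂ) (ht : 0 < t.im) :
    (Polynomial.derivative f).eval t ≠ 0 := by
  have hf : f ≠ 0 := by intro h; rw [h] at hdeg; simp at hdeg
  have hsplit : Splits f := IsAlgClosed.splits f
  have heq : f = C f.leadingCoeff * (f.roots.map fun a => X - C a).prod :=
    hsplit.eq_prod_roots
  set m := f.roots with hm
  have hcard : Multiset.card m = f.natDegree := by
    have h := hsplit.natDegree_eq_card_roots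
    rw [hm]
    exact h.symm
  have him : ∀ r ∈ m, r.im ≤ 0 := by
    intro r hr
    by_contra h
    push_neg at h
    exact hnv r h ((Polynomial.mem_roots hf).mp hr)
  have hne : ∀ r ∈ m, t - r ≠ 0 := by
    intro r hr
    intro h
    have : (t - r).im = 0 := by rw [h]; simp
    rw [Complex.sub_im] at this
    have := him r hr
    linarith
  have hlc : f.leadingCoeff ≠ 0 := Polynomial.leadingCoeff_ne_zero.mpr hf
  have hder : Polynomial.derivative f
      = C f.leadingCoeff * Polynomial.derivative ((m.map fun r => X - C r).prod) := by
    conv_lhs => rw [heq]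
    rw [Polynomial.derivative_mul, Polynomial.derivative_C]
    simp
  rw [hder, Polynomial.eval_mul, Polynomial.eval_C,
    deriv_multiset_prod_eval t m hne]
  have hP : ((m.map fun r => X - C r).prod).eval t ≠ 0 := by
    rw [Polynomial.eval_multiset_prod, Multiset.map_map]
    apply Multiset.prod_ne_zero
    intro h0
    obtain ⟨r, hr, hr0⟩ := Multiset.mem_map.mp h0
    simp only [Function.comp_apply, Polynomial.eval_sub, Polynomial.eval_X,
      Polynomial.eval_C] at hr0
    exact hne r hr hr0
  have hS : ((m.map fun r => (t - r)⁻¹).sum).im < 0 := by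
    have him_sum : ((m.map fun r => (t - r)⁻¹).sum).im
        = ((m.map fun r => (t - r)⁻¹).map Complex.im).sum := by
      exact map_multiset_sum Complex.imAddGroupHom _
    rw [him_sum, Multiset.map_map]
    apply multiset_sum_neg
    · intro h0
      rw [Multiset.map_eq_zero] at h0
      rw [h0] at hcard
      simp at hcard
      omega
    · intro x hx
      obtain ⟨r, hr, rfl⟩ := Multiset.mem_map.mp hx
      simp only [Function.comp_apply]
      rw [Complex.inv_im]
      have h1 : 0 < (t - r).im := by
        rw [Complex.sub_im]
        have := him r hr
        linarith
      have h2 : 0 < Complex.normSq (t - r) := by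
        rw [Complex.normSq_pos]
        exact hne r hr
      apply div_neg_of_neg_of_pos (by linarith) h2
  have hSne : (m.map fun r => (t - r)⁻¹).sum ≠ 0 := by
    intro h
    rw [h] at hS
    simp at hS
  exact mul_ne_zero hlc (mul_ne_zero hP hSne)

lemma evalpoly {ι Ω : Type*} [Fintype Ω] (J' : Finset ι) (κ : Ω → ι → ℕ) (z0 e : ι → ℂ)
    (cf : Ω → ℂ) (u : ℂ) :
    Polynomial.eval u (∑ ω, Polynomial.C (cf ω)
        * ∏ i ∈ J', (Polynomial.C (z0 i) + Polynomial.C (e i) * Polynomial.X) ^ κ ω i)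
      = ∑ ω, cf ω * ∏ i ∈ J', (z0 i + e i * u) ^ κ ω i := by
  rw [Polynomial.eval_finset_sum]
  apply Finset.sum_congr rfl
  intro ω _
  rw [Polynomial.eval_mul, Polynomial.eval_C, Polynomial.eval_prod]
  congr 1
  apply Finset.prod_congr rfl
  intro i _
  rw [Polynomial.eval_pow, Polynomial.eval_add, Polynomial.eval_C, Polynomial.eval_mul,
    Polynomial.eval_C, Polynomial.eval_X]

lemma hz_line {ι Ω : Type*} [Fintype Ω] [DecidableEq ι] (J' : Finset ι) (hne : J'.Nonempty)
    (κ : Ω → ι → ℕ) (z0 : ι → ℂ) (him : ∀ i ∈ J', 0 < (z0 i).im) (b : Ω → ℂ)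
    (hb1 : ∑ ω, b ω ≠ 0)
    (happrox : ∀ δ : ℝ, 0 < δ → ∃ a : Ω → ℂ, (∀ ω, ‖a ω - b ω‖ ≤ δ) ∧
      ∀ y : ι → ℂ, (∀ i ∈ J', 0 < (y i).im) → ∑ ω, a ω * ∏ i ∈ J', y i ^ κ ω i ≠ 0) :
    ∑ ω, b ω * ∏ i ∈ J', z0 i ^ κ ω i ≠ 0 := by
  classical
  set e : ι → ℂ := fun i => 1 - z0 i with he
  obtain ⟨ρ, hρ, hball⟩ := exists_rho J' hne z0 e him
  set G : Polynomial ℂ := ∑ ω, Polynomial.C (b ω)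
      * ∏ i ∈ J', (Polynomial.C (z0 i) + Polynomial.C (e i) * Polynomial.X) ^ κ ω i with hG_def
  have hone : ∀ i ∈ J', z0 i + e i * 1 = 1 := by
    intro i _
    rw [he]
    ring
  have hGne : G ≠ 0 := by
    intro h
    apply hb1
    have h1 := evalpoly J' κ z0 e b 1
    rw [← hG_def, h] at h1
    simp only [Polynomial.eval_zero] at h1
    have h2 : ∀ ω : Ω, ∏ i ∈ J', (z0 i + e i * 1) ^ κ ω i = 1 := by
      intro ω
      apply Finset.prod_eq_one
      intro i hi
      rw [hone i hi, one_pow]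
    have h3 : ∑ ω, b ω = ∑ ω, b ω * ∏ i ∈ J', (z0 i + e i * 1) ^ κ ω i := by
      apply Finset.sum_congr rfl
      intro ω _
      rw [h2 ω, mul_one]
    rw [h3, ← h1]
  set M : ℝ := 1 + ∑ i ∈ J', (‖z0 i‖ + ρ * ‖e i‖) with hM_def
  have hsum_nn : 0 ≤ ∑ i ∈ J', (‖z0 i‖ + ρ * ‖e i‖) :=
    Finset.sum_nonneg fun i _ => by positivity
  have hM1 : 1 ≤ M := by rw [hM_def]; linarith
  have hwM : ∀ u : ℂ, ‖u‖ ≤ ρ → ∀ i ∈ J', ‖z0 i + e i * u‖ ≤ M := by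
    intro u hu i hi
    have h1 : ‖z0 i + e i * u‖ ≤ ‖z0 i‖ + ‖e i‖ * ‖u‖ := by
      calc ‖z0 i + e i * u‖ ≤ ‖z0 i‖ + ‖e i * u‖ := norm_add_le _ _
        _ = ‖z0 i‖ + ‖e i‖ * ‖u‖ := by rw [norm_mul]
    have h2 : ‖e i‖ * ‖u‖ ≤ ρ * ‖e i‖ := by
      rw [mul_comm]
      exact mul_le_mul_of_nonneg_right hu (norm_nonneg _)
    have h3 : ‖z0 i‖ + ρ * ‖e i‖ ≤ ∑ j ∈ J', (‖z0 j‖ + ρ * ‖e j‖) :=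
      Finset.single_le_sum (f := fun j => ‖z0 j‖ + ρ * ‖e j‖) (fun j _ => by positivity) hi
    rw [hM_def]
    linarith
  set B : ℝ := ∑ ω, M ^ (∑ i ∈ J', κ ω i) with hB_def
  have hB0 : 0 ≤ B := Finset.sum_nonneg fun ω _ => by positivity
  have key : G.eval 0 ≠ 0 := by
    apply hurwitz_at G hGne ρ hρ
    intro δ hδ
    obtain ⟨a, haδ, hanv⟩ := happrox (δ / (B + 1)) (by positivity)
    refine ⟨∑ ω, Polynomial.C (a ω)
      * ∏ i ∈ J', (Polynomial.C (z0 i) + Polynomial.C (e i) * Polynomial.X) ^ κ ω i, ?_, ?_⟩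
    · intro u hu
      rw [evalpoly J' κ z0 e a u]
      exact hanv _ (fun i hi => by have := hball u hu i hi; rwa [mul_comm] at this)
    · intro u hu
      rw [evalpoly J' κ z0 e a u, hG_def, evalpoly J' κ z0 e b u]
      rw [← Finset.sum_sub_distrib]
      have hterm : ∀ ω : Ω, a ω * ∏ i ∈ J', (z0 i + e i * u) ^ κ ω i
          - b ω * ∏ i ∈ J', (z0 i + e i * u) ^ κ ω i
          = (a ω - b ω) * ∏ i ∈ J', (z0 i + e i * u) ^ κ ω i := by
        intro ω; ring
      rw [Finset.sum_congr rfl fun ω _ => hterm ω]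
      calc ‖∑ ω, (a ω - b ω) * ∏ i ∈ J', (z0 i + e i * u) ^ κ ω i‖
          ≤ ∑ ω, ‖(a ω - b ω) * ∏ i ∈ J', (z0 i + e i * u) ^ κ ω i‖ := norm_sum_le _ _
        _ ≤ ∑ ω, (δ / (B + 1)) * M ^ (∑ i ∈ J', κ ω i) := by
            apply Finset.sum_le_sum
            intro ω _
            rw [norm_mul]
            exact mul_le_mul (haδ ω)
              (prod_pow_norm_le J' _ _ M hM1 (fun i hi => hwM u hu i hi))
              (norm_nonneg _) (by positivity)
        _ = (δ / (B + 1)) * B := by rw [← Finset.mul_sum, hB_def]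
        _ ≤ δ := by
            rw [div_mul_eq_mul_div, div_le_iff₀ (by positivity)]
            nlinarith
  have hG0 : G.eval 0 = ∑ ω, b ω * ∏ i ∈ J', z0 i ^ κ ω i := by
    rw [hG_def, evalpoly J' κ z0 e b 0]
    apply Finset.sum_congr rfl
    intro ω _
    congr 1
    apply Finset.prod_congr rfl
    intro i _
    rw [mul_zero, add_zero]
  rw [← hG0]
  exact key

lemma main_induction {ι Ω : Type*} [Fintype ι] [Fintype Ω] [DecidableEq ι]
    (κ : Ω → ι → ℕ) (d : ι → ℕ) :
    ∀ J : Finset ι, ∀ v : Ω → ℝ, (∀ ω, 0 ≤ v ω) →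
      (∀ i ∈ J, 1 ≤ d i) →
      (∀ ω, v ω ≠ 0 → ∀ i ∈ J, κ ω i ≤ d i) →
      (∀ x : ι → ℂ, (∀ i ∈ J, 0 < (x i).im) →
          ∑ ω, (v ω : ℂ) * ∏ i ∈ J, (x i) ^ κ ω i ≠ 0) →
      ∀ c : ℝ, 0 < c →
        (∀ x : ι → ℝ, (∀ i ∈ J, 0 < x i) →
          c * ∏ i ∈ J, x i ≤ ∑ ω, v ω * ∏ i ∈ J, (x i) ^ κ ω i) →
        c * ∏ i ∈ J, gg (d i)
          ≤ ∑ ω ∈ Finset.univ.filter (fun ω => ∀ i ∈ J, κ ω i = 1), v ω := by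
  classical
  intro J
  induction J using Finset.induction_on with
  | empty =>
    intro v hv0 _ _ _ c hc hbound
    have := hbound (fun _ => 1) (by simp)
    simpa using this
  | @insert n J' hn ih =>
    intro v hv0 hd1 hdm hstab c hc hbound
    set v' : Ω → ℝ := fun ω => if κ ω n = 1 then v ω else 0 with hv'_def
    have hv'0 : ∀ ω, 0 ≤ v' ω := by
      intro ω
      rw [hv'_def]
      by_cases h : κ ω n = 1 <;> simp [h, hv0 ω]
    have hdn1 : 1 ≤ d n := hd1 n (Finset.mem_insert_self n J')
    have hsumv : c ≤ ∑ ω, v ω := by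
      have := hbound (fun _ => 1) (by intro i _; norm_num)
      simpa using this
    have hv'v : ∀ ω, v' ω ≠ 0 → v ω ≠ 0 := by
      intro ω h
      rw [hv'_def] at h
      by_cases hk : κ ω n = 1
      · simpa [hk] using h
      · simp [hk] at h
    -- Step 1 : the new pointwise bound
    have hbound' : ∀ x : ι → ℝ, (∀ i ∈ J', 0 < x i) →
        (c * gg (d n)) * ∏ i ∈ J', x i ≤ ∑ ω, v' ω * ∏ i ∈ J', (x i) ^ κ ω i := by
      intro x hx
      have hxpos : 0 < ∏ i ∈ J', x i := Finset.prod_pos hx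
      set A : Ω → ℝ := fun ω => v ω * ∏ i ∈ J', x i ^ κ ω i with hA_def
      have hA0 : ∀ ω, 0 ≤ A ω := by
        intro ω
        exact mul_nonneg (hv0 ω) (Finset.prod_nonneg fun i hi => pow_nonneg (hx i hi).le _)
      set f : Polynomial ℝ := ∑ ω, Polynomial.C (A ω) * Polynomial.X ^ κ ω n with hf_def
      have hcoeff : ∀ k, f.coeff k = ∑ ω, if κ ω n = k then A ω else 0 := by
        intro k
        rw [hf_def, Polynomial.finset_sum_coeff]
        apply Finset.sum_congr rfl
        intro ω _
        rw [Polynomial.coeff_C_mul, Polynomial.coeff_X_pow]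
        by_cases h : κ ω n = k
        · rw [if_pos (by omega), if_pos h, mul_one]
        · rw [if_neg (by omega), if_neg h, mul_zero]
      have hcnn : ∀ k, 0 ≤ f.coeff k := by
        intro k
        rw [hcoeff]
        apply Finset.sum_nonneg
        intro ω _
        by_cases h : κ ω n = k
        · rw [if_pos h]; exact hA0 ω
        · rw [if_neg h]
      have hdegf : f.natDegree ≤ d n := by
        apply Polynomial.natDegree_le_iff_coeff_eq_zero.mpr
        intro k hk
        rw [hcoeff]
        apply Finset.sum_eq_zero
        intro ω _
        by_cases hv : v ω = 0
        · simp [hA_def, hv]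
        · have hle := hdm ω hv n (Finset.mem_insert_self n J')
          have hne : κ ω n ≠ k := by omega
          rw [if_neg hne]
      have hevalf : ∀ s : ℝ, f.eval s
          = ∑ ω, v ω * ∏ i ∈ insert n J', (if i = n then s else x i) ^ κ ω i := by
        intro s
        rw [hf_def, Polynomial.eval_finset_sum]
        apply Finset.sum_congr rfl
        intro ω _
        rw [Polynomial.eval_mul, Polynomial.eval_C, Polynomial.eval_pow, Polynomial.eval_X,
          prod_if_insert hn s x (κ ω), hA_def]
        ring
      have hbuni : ∀ s : ℝ, 0 < s → (c * ∏ i ∈ J', x i) * s ≤ f.eval s := by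
        intro s hs
        have h := hbound (fun i => if i = n then s else x i) ?_
        · rw [hevalf s]
          have hprod : ∏ i ∈ insert n J', (if i = n then s else x i)
              = s * ∏ i ∈ J', x i := by
            rw [Finset.prod_insert hn, if_pos rfl]
            congr 1
            apply Finset.prod_congr rfl
            intro i hi
            rw [if_neg (by rintro rfl; exact hn hi)]
          rw [hprod] at h
          calc (c * ∏ i ∈ J', x i) * s = c * (s * ∏ i ∈ J', x i) := by ring
            _ ≤ _ := h
        · intro i hi
          rcases Finset.mem_insert.mp hi with rfl | hi'
          · rw [if_pos rfl]; exact hs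
          · rw [if_neg (by rintro rfl; exact hn hi')]
            exact hx i hi'
      have hstabf : ∀ z : ℂ, 0 < z.im → (f.map (algebraMap ℝ ℂ)).eval z ≠ 0 := by
        intro z hz
        have hmapeval : (f.map (algebraMap ℝ ℂ)).eval z = ∑ ω, (A ω : ℂ) * z ^ κ ω n := by
          rw [Polynomial.eval_map, hf_def, Polynomial.eval₂_finset_sum]
          apply Finset.sum_congr rfl
          intro ω _
          rw [Polynomial.eval₂_mul, Polynomial.eval₂_C, Polynomial.eval₂_X_pow]
          norm_num
        have hSA : (0:ℝ) < ∑ ω, A ω := by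
            have h := hbound (fun i => if i = n then 1 else x i) ?_
            · have hprod : ∏ i ∈ insert n J', (if i = n then (1:ℝ) else x i)
                  = 1 * ∏ i ∈ J', x i := by
                rw [Finset.prod_insert hn, if_pos rfl]
                congr 1
                apply Finset.prod_congr rfl
                intro i hi
                rw [if_neg (by rintro rfl; exact hn hi)]
              rw [hprod] at h
              have hsum_eq : ∑ ω, v ω * ∏ i ∈ insert n J', (if i = n then (1:ℝ) else x i) ^ κ ω i
                  = ∑ ω, A ω := by
                apply Finset.sum_congr rfl
                intro ω _
                rw [prod_if_insert hn 1 x (κ ω), one_pow, one_mul, hA_def]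
              rw [hsum_eq] at h
              calc (0:ℝ) < c * (1 * ∏ i ∈ J', x i) := by positivity
                _ ≤ _ := h
            · intro i hi
              rcases Finset.mem_insert.mp hi with rfl | hi'
              · rw [if_pos rfl]; norm_num
              · rw [if_neg (by rintro rfl; exact hn hi')]
                exact hx i hi'
        have hb1' : (∑ ω, ((A ω : ℝ) : ℂ)) ≠ 0 := by
          intro hcon
          have : ((∑ ω, A ω : ℝ) : ℂ) = 0 := by exact_mod_cast hcon
          rw [Complex.ofReal_eq_zero] at this
          linarith
        have happ : ∀ δ : ℝ, 0 < δ → ∃ a : Ω → ℂ, (∀ ω, ‖a ω - ((A ω : ℝ) : ℂ)‖ ≤ δ) ∧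
            ∀ y : Unit → ℂ, (∀ i ∈ (Finset.univ : Finset Unit), 0 < (y i).im) →
              ∑ ω, a ω * ∏ i ∈ (Finset.univ : Finset Unit), y i ^ κ ω n ≠ 0 := by
          intro δ hδ
          have hsumx_nn : (0:ℝ) ≤ ∑ i ∈ J', x i := Finset.sum_nonneg fun i hi => (hx i hi).le
          set M : ℝ := 1 + ∑ i ∈ J', x i with hM_def
          have hM1 : 1 ≤ M := by rw [hM_def]; linarith
          set B' : ℝ := ∑ ω, v ω * ((∑ i ∈ J', (κ ω i : ℝ)) * M ^ (∑ i ∈ J', κ ω i)) with hB'_def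
          have hB'0 : 0 ≤ B' := Finset.sum_nonneg fun ω _ => by
            apply mul_nonneg (hv0 ω)
            apply mul_nonneg (Finset.sum_nonneg fun i _ => by positivity)
            positivity
          set ε : ℝ := min 1 (δ / (B' + 1)) with hε_def
          have hε0 : 0 < ε := lt_min one_pos (by positivity)
          have hε1 : ε ≤ 1 := min_le_left _ _
          have hεB : ε * B' ≤ δ := by
            calc ε * B' ≤ (δ / (B' + 1)) * B' :=
                  mul_le_mul_of_nonneg_right (min_le_right _ _) hB'0
              _ ≤ δ := by
                  rw [div_mul_eq_mul_div, div_le_iff₀ (by positivity)]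
                  nlinarith
          refine ⟨fun ω => (v ω : ℂ) * ∏ i ∈ J', ((x i : ℂ) + ε * Complex.I) ^ κ ω i, ?_, ?_⟩
          · intro ω
            have hbω : ((A ω : ℝ) : ℂ) = (v ω : ℂ) * ∏ i ∈ J', ((x i : ℂ)) ^ κ ω i := by
              rw [hA_def]
              push_cast
              ring
            rw [hbω, ← mul_sub, norm_mul, Complex.norm_real]
            have hxS : ∀ i ∈ J', x i ≤ ∑ j ∈ J', x j := fun i hi =>
              Finset.single_le_sum (f := fun j => x j) (fun j hj => (hx j hj).le) hi
            have hd2 := norm_prod_pow_sub (fun i => (x i : ℂ) + ε * Complex.I)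
              (fun i => (x i : ℂ)) (κ ω) M ε hM1 hε0.le J'
              (fun i hi => by
                calc ‖(x i : ℂ) + ε * Complex.I‖ ≤ ‖(x i : ℂ)‖ + ‖(ε : ℂ) * Complex.I‖ :=
                      norm_add_le _ _
                  _ = x i + ε := by
                      rw [norm_mul, Complex.norm_I, mul_one, Complex.norm_real,
                        Complex.norm_real, Real.norm_eq_abs, Real.norm_eq_abs,
                        abs_of_pos (hx i hi), abs_of_pos hε0]
                  _ ≤ M := by rw [hM_def]; linarith [hxS i hi, hε1])
              (fun i hi => by
                rw [Complex.norm_real, Real.norm_eq_abs, abs_of_pos (hx i hi), hM_def]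
                linarith [hxS i hi])
              (fun i _ => by
                rw [show (x i : ℂ) + ε * Complex.I - (x i : ℂ) = (ε : ℂ) * Complex.I by ring,
                  norm_mul, Complex.norm_I, mul_one, Complex.norm_real, Real.norm_eq_abs,
                  abs_of_pos hε0])
            have hsingle : v ω * ((∑ i ∈ J', (κ ω i : ℝ)) * M ^ (∑ i ∈ J', κ ω i)) ≤ B' := by
              rw [hB'_def]
              exact Finset.single_le_sum
                (f := fun ω => v ω * ((∑ i ∈ J', (κ ω i : ℝ)) * M ^ (∑ i ∈ J', κ ω i)))
                (fun ω' _ => by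
                  apply mul_nonneg (hv0 ω')
                  apply mul_nonneg (Finset.sum_nonneg fun i _ => by positivity)
                  positivity)
                (Finset.mem_univ ω)
            calc ‖(v ω : ℝ)‖ * ‖∏ i ∈ J', ((x i : ℂ) + ε * Complex.I) ^ κ ω i
                  - ∏ i ∈ J', ((x i : ℂ)) ^ κ ω i‖
                ≤ v ω * ((∑ i ∈ J', (κ ω i : ℝ)) * M ^ (∑ i ∈ J', κ ω i) * ε) := by
                  rw [Real.norm_eq_abs, abs_of_nonneg (hv0 ω)]
                  exact mul_le_mul_of_nonneg_left hd2 (hv0 ω)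
              _ = (v ω * ((∑ i ∈ J', (κ ω i : ℝ)) * M ^ (∑ i ∈ J', κ ω i))) * ε := by ring
              _ ≤ B' * ε := mul_le_mul_of_nonneg_right hsingle hε0.le
              _ ≤ δ := by rw [mul_comm]; exact hεB
          · intro y hy
            have hrw : ∑ ω, ((v ω : ℂ) * ∏ i ∈ J', ((x i : ℂ) + ε * Complex.I) ^ κ ω i)
                  * ∏ i ∈ Finset.univ, y i ^ κ ω n
                = ∑ ω, (v ω : ℂ)
                  * ∏ i ∈ insert n J', (if i = n then y () else (x i : ℂ) + ε * Complex.I) ^ κ ω i := by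
              apply Finset.sum_congr rfl
              intro ω _
              rw [prod_if_insert hn (y ()) (fun i => (x i : ℂ) + ε * Complex.I) (κ ω),
                Fintype.prod_unique]
              ring
            rw [hrw]
            apply hstab
            intro i hi
            rcases Finset.mem_insert.mp hi with rfl | hi'
            · rw [if_pos rfl]
              exact hy () (Finset.mem_univ ())
            · rw [if_neg (by rintro rfl; exact hn hi')]
              simp [Complex.add_im, Complex.mul_im, hε0]
        have hgoal := hz_line (ι := Unit) (Ω := Ω) Finset.univ
          Finset.univ_nonempty (fun ω _ => κ ω n) (fun _ => z)
          (fun _ _ => hz) (fun ω => ((A ω : ℝ) : ℂ)) hb1' happ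
        have hconv : ∑ ω, ((A ω : ℝ) : ℂ) * z ^ κ ω n
            = ∑ ω, ((A ω : ℝ) : ℂ) * ∏ i ∈ (Finset.univ : Finset Unit), z ^ κ ω n :=
          Finset.sum_congr rfl fun ω _ => by rw [Fintype.prod_unique]
        rw [hmapeval, hconv]
        exact hgoal
      have huni := univar (d n) hdn1 f hcnn hdegf hstabf (c * ∏ i ∈ J', x i)
        (mul_pos hc hxpos).le hbuni
      have hc1f : f.coeff 1 = ∑ ω, v' ω * ∏ i ∈ J', x i ^ κ ω i := by
        rw [hcoeff 1]
        apply Finset.sum_congr rfl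
        intro ω _
        rw [hv'_def, hA_def]
        by_cases h : κ ω n = 1 <;> simp [h]
      calc (c * gg (d n)) * ∏ i ∈ J', x i = gg (d n) * (c * ∏ i ∈ J', x i) := by ring
        _ ≤ f.coeff 1 := huni
        _ = _ := hc1f
    -- cast helper
    have cast_ne : ∀ g : Ω → ℝ, 0 < (∑ ω, g ω) → (∑ ω, ((g ω : ℝ) : ℂ)) ≠ 0 := by
      intro g hg hcon
      have h2 : ((∑ ω, g ω : ℝ) : ℂ) = 0 := by push_cast; exact hcon
      rw [Complex.ofReal_eq_zero] at h2
      linarith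
    have hsum'pos : (0:ℝ) < ∑ ω, v' ω := by
      have h := hbound' (fun _ => 1) (by intro i _; norm_num)
      have h2 : ∑ ω, v' ω * ∏ i ∈ J', ((fun _ => (1:ℝ)) i) ^ κ ω i = ∑ ω, v' ω := by
        apply Finset.sum_congr rfl
        intro ω _
        rw [Finset.prod_congr rfl (fun i _ => one_pow _), Finset.prod_const_one, mul_one]
      rw [h2, Finset.prod_const_one, mul_one] at h
      calc (0:ℝ) < c * gg (d n) := mul_pos hc (gg_pos hdn1)
        _ ≤ _ := h
    -- support and degree D
    have hsupp_ne : ∃ ω₀, v ω₀ ≠ 0 := by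
      have h0 : (0:ℝ) < ∑ ω, v ω := lt_of_lt_of_le hc hsumv
      obtain ⟨ω, _, hω⟩ := Finset.exists_ne_zero_of_sum_ne_zero (ne_of_gt h0)
      exact ⟨ω, hω⟩
    have hsuppF : (Finset.univ.filter (fun ω => v ω ≠ 0)).Nonempty := by
      obtain ⟨ω₀, h⟩ := hsupp_ne
      exact ⟨ω₀, Finset.mem_filter.mpr ⟨Finset.mem_univ _, h⟩⟩
    set D := (Finset.univ.filter (fun ω => v ω ≠ 0)).sup (fun ω => κ ω n) with hD_def
    have hDmax : ∀ ω, v ω ≠ 0 → κ ω n ≤ D := by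
      intro ω h
      rw [hD_def]
      exact Finset.le_sup (f := fun ω => κ ω n)
        (Finset.mem_filter.mpr ⟨Finset.mem_univ _, h⟩)
    obtain ⟨ω₀, hω₀supp, hω₀D⟩ : ∃ ω₀ ∈ Finset.univ.filter (fun ω => v ω ≠ 0),
        D = κ ω₀ n := Finset.exists_mem_eq_sup _ hsuppF _
    have hω₀v : v ω₀ ≠ 0 := (Finset.mem_filter.mp hω₀supp).2
    have hD1 : 1 ≤ D := by
      by_contra hcon
      push_neg at hcon
      have hall : ∀ ω, v ω ≠ 0 → κ ω n = 0 := fun ω h => by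
        have := hDmax ω h; omega
      have hvnn : (0:ℝ) ≤ ∑ ω, v ω := le_trans hc.le hsumv
      set t : ℝ := (∑ ω, v ω + 1) / c with ht_def
      have htpos : 0 < t := by
        rw [ht_def]
        apply div_pos (by linarith) hc
      have h := hbound (fun i => if i = n then t else 1) ?_
      · have hL : ∏ i ∈ insert n J', (if i = n then t else (1:ℝ)) = t := by
          rw [Finset.prod_insert hn, if_pos rfl,
            Finset.prod_eq_one (fun i hi => if_neg (by rintro rfl; exact hn hi)), mul_one]
        have hR : ∑ ω, v ω * ∏ i ∈ insert n J', (if i = n then t else (1:ℝ)) ^ κ ω i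
            = ∑ ω, v ω := by
          apply Finset.sum_congr rfl
          intro ω _
          by_cases hv : v ω = 0
          · rw [hv]; ring
          · rw [prod_if_insert hn t (fun _ => 1) (κ ω), hall ω hv, pow_zero,
              Finset.prod_congr rfl (fun i _ => one_pow _), Finset.prod_const_one]
            ring
        rw [hL, hR] at h
        have hct : c * t = ∑ ω, v ω + 1 := by
          rw [ht_def]
          field_simp
        linarith
      · intro i hi
        rcases Finset.mem_insert.mp hi with rfl | hi'
        · rw [if_pos rfl]; exact htpos
        · rw [if_neg (by rintro rfl; exact hn hi')]; norm_num
    -- positivity of the top-coefficient sum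
    have htoppos : (0:ℝ) < ∑ ω, (if κ ω n = D then v ω else 0) := by
      have hterm : ∀ ω, 0 ≤ (if κ ω n = D then v ω else 0) := fun ω => by
        by_cases h : κ ω n = D <;> simp [h, hv0 ω]
      have hmem : 0 < (if κ ω₀ n = D then v ω₀ else 0) := by
        rw [if_pos hω₀D.symm]
        exact lt_of_le_of_ne (hv0 ω₀) (Ne.symm hω₀v)
      calc (0:ℝ) < _ := hmem
        _ ≤ _ := Finset.single_le_sum (fun ω _ => hterm ω) (Finset.mem_univ ω₀)
    -- Step A1 : stability of the top coefficient
    have hcD : ∀ y : ι → ℂ, (∀ i ∈ J', 0 < (y i).im) →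
        ∑ ω, (if κ ω n = D then (v ω : ℂ) else 0) * ∏ i ∈ J', y i ^ κ ω i ≠ 0 := by
      have hcast : ∀ ω : Ω, (((if κ ω n = D then v ω else 0 : ℝ)) : ℂ)
          = (if κ ω n = D then (v ω : ℂ) else 0) := by
        intro ω
        by_cases h : κ ω n = D <;> simp [h]
      have hb1 : (∑ ω, (if κ ω n = D then (v ω : ℂ) else 0)) ≠ 0 := by
        rw [show (∑ ω, (if κ ω n = D then (v ω:ℂ) else 0))
            = ∑ ω, (((if κ ω n = D then v ω else 0 : ℝ)) : ℂ) from
          Finset.sum_congr rfl (fun ω _ => (hcast ω).symm)]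
        exact cast_ne _ htoppos
      rcases Finset.eq_empty_or_nonempty J' with hJe | hJ'ne
      · intro y _
        subst hJe
        simp only [Finset.prod_empty, mul_one]
        exact hb1
      · intro y hy
        apply hz_line J' hJ'ne κ y hy (fun ω => if κ ω n = D then (v ω : ℂ) else 0) hb1
        intro δ hδ
        have hB2pos : (0:ℝ) < ∑ ω, v ω := lt_of_lt_of_le hc hsumv
        set lam : ℝ := max 1 ((∑ ω, v ω + 1) / δ) with hlam_def
        have hlam1 : 1 ≤ lam := le_max_left _ _
        have hlam0 : 0 < lam := lt_of_lt_of_le one_pos hlam1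
        have hIlam : (Complex.I * (lam : ℂ)) ≠ 0 := by
          apply mul_ne_zero Complex.I_ne_zero
          exact_mod_cast ne_of_gt hlam0
        have hlam_norm : ‖Complex.I * (lam:ℂ)‖ = lam := by
          rw [norm_mul, Complex.norm_I, one_mul, Complex.norm_real, Real.norm_eq_abs,
            abs_of_pos hlam0]
        refine ⟨fun ω => (v ω : ℂ) * (Complex.I * lam) ^ κ ω n
          * ((Complex.I * (lam:ℂ)) ^ D)⁻¹, ?_, ?_⟩
        · intro ω
          dsimp only
          by_cases hkD : κ ω n = D
          · rw [hkD, if_pos rfl, mul_assoc,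
              mul_inv_cancel₀ (pow_ne_zero D hIlam), mul_one, sub_self, norm_zero]
            exact hδ.le
          · rw [if_neg hkD, sub_zero]
            by_cases hv : v ω = 0
            · simp [hv]
              exact hδ.le
            · have hklt : κ ω n < D := lt_of_le_of_ne (hDmax ω hv) hkD
              have hnorm : ‖(v ω : ℂ) * (Complex.I * (lam:ℂ)) ^ κ ω n
                  * ((Complex.I * (lam:ℂ)) ^ D)⁻¹‖ = v ω * lam ^ κ ω n * (lam ^ D)⁻¹ := by
                rw [norm_mul, norm_mul, norm_inv, norm_pow, norm_pow, hlam_norm,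
                  Complex.norm_real, Real.norm_eq_abs,
                  abs_of_pos (lt_of_le_of_ne (hv0 ω) (Ne.symm hv))]
              rw [hnorm]
              have hstep : v ω * lam ^ κ ω n * (lam ^ D)⁻¹ ≤ v ω / lam := by
                have h1 : lam ^ κ ω n ≤ lam ^ (D - 1) :=
                  pow_le_pow_right₀ hlam1 (by omega)
                have h2 : lam ^ D = lam ^ (D - 1) * lam := by
                  rw [← pow_succ]
                  congr 1
                  omega
                have hlpow : (0:ℝ) < lam ^ (D - 1) := pow_pos hlam0 _
                rw [h2, div_eq_mul_inv, mul_inv]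
                calc v ω * lam ^ κ ω n * ((lam ^ (D-1))⁻¹ * lam⁻¹)
                    ≤ v ω * lam ^ (D-1) * ((lam ^ (D-1))⁻¹ * lam⁻¹) := by
                      apply mul_le_mul_of_nonneg_right
                      · exact mul_le_mul_of_nonneg_left h1 (hv0 ω)
                      · positivity
                  _ = v ω * lam⁻¹ := by
                      field_simp
              have hfin : v ω / lam ≤ δ := by
                have h1 : v ω ≤ ∑ ω', v ω' :=
                  Finset.single_le_sum (fun ω' _ => hv0 ω') (Finset.mem_univ ω)
                have h2 : (∑ ω', v ω' + 1) / δ ≤ lam := le_max_right _ _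
                rw [div_le_iff₀ hlam0]
                have h4 : δ * ((∑ ω', v ω' + 1) / δ) ≤ δ * lam :=
                  mul_le_mul_of_nonneg_left h2 hδ.le
                have h5 : δ * ((∑ ω', v ω' + 1) / δ) = ∑ ω', v ω' + 1 := by
                  field_simp
                nlinarith
              linarith [hstep, hfin]
        · intro y' hy'
          have hfactor : ∑ ω, ((v ω : ℂ) * (Complex.I * (lam:ℂ)) ^ κ ω n
                * ((Complex.I * (lam:ℂ)) ^ D)⁻¹) * ∏ i ∈ J', y' i ^ κ ω i
              = (∑ ω, (v ω : ℂ)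
                  * ∏ i ∈ insert n J', (if i = n then Complex.I * (lam:ℂ) else y' i) ^ κ ω i)
                * ((Complex.I * (lam:ℂ)) ^ D)⁻¹ := by
            rw [Finset.sum_mul]
            apply Finset.sum_congr rfl
            intro ω _
            rw [prod_if_insert hn (Complex.I * (lam:ℂ)) y' (κ ω)]
            ring
          rw [hfactor]
          apply mul_ne_zero
          · apply hstab
            intro i hi
            rcases Finset.mem_insert.mp hi with rfl | hi'
            · rw [if_pos rfl]
              simp [Complex.mul_im, hlam0]
            · rw [if_neg (by rintro rfl; exact hn hi')]
              exact hy' i hi'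
          · exact inv_ne_zero (pow_ne_zero D hIlam)
    -- Step A2 : Gauss-Lucas for the partial derivative
    have hder : ∀ y : ι → ℂ, (∀ i ∈ J', 0 < (y i).im) → ∀ t : ℂ, 0 < t.im →
        ∑ ω, ((v ω : ℂ) * (κ ω n : ℂ) * t ^ (κ ω n - 1)) * ∏ i ∈ J', y i ^ κ ω i ≠ 0 := by
      intro y hy t ht
      set fz : Polynomial ℂ := ∑ ω, Polynomial.C ((v ω:ℂ) * ∏ i ∈ J', y i ^ κ ω i)
        * Polynomial.X ^ κ ω n with hfz_def
      have hfzcoeff : ∀ k, fz.coeff k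
          = ∑ ω, if κ ω n = k then (v ω:ℂ) * ∏ i ∈ J', y i ^ κ ω i else 0 := by
        intro k
        rw [hfz_def, Polynomial.finset_sum_coeff]
        apply Finset.sum_congr rfl
        intro ω _
        rw [Polynomial.coeff_C_mul, Polynomial.coeff_X_pow]
        by_cases h : κ ω n = k
        · rw [if_pos (by omega), if_pos h, mul_one]
        · rw [if_neg (by omega), if_neg h, mul_zero]
      have hfzD : fz.coeff D ≠ 0 := by
        rw [hfzcoeff]
        have hconv : ∑ ω, (if κ ω n = D then (v ω:ℂ) * ∏ i ∈ J', y i ^ κ ω i else 0)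
            = ∑ ω, (if κ ω n = D then (v ω : ℂ) else 0) * ∏ i ∈ J', y i ^ κ ω i := by
          apply Finset.sum_congr rfl
          intro ω _
          by_cases h : κ ω n = D <;> simp [h]
        rw [hconv]
        exact hcD y hy
      have hfzdeg_le : fz.natDegree ≤ D := by
        apply Polynomial.natDegree_le_iff_coeff_eq_zero.mpr
        intro k hk
        rw [hfzcoeff]
        apply Finset.sum_eq_zero
        intro ω _
        by_cases hv : v ω = 0
        · by_cases h : κ ω n = k <;> simp [h, hv]
        · have := hDmax ω hv
          rw [if_neg (by omega)]
      have hfzdeg : 1 ≤ fz.natDegree :=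
        le_trans hD1 (Polynomial.le_natDegree_of_ne_zero hfzD)
      have hfznv : ∀ w : ℂ, 0 < w.im → fz.eval w ≠ 0 := by
        intro w hw
        have heval : fz.eval w = ∑ ω, (v ω:ℂ)
            * ∏ i ∈ insert n J', (if i = n then w else y i) ^ κ ω i := by
          rw [hfz_def, Polynomial.eval_finset_sum]
          apply Finset.sum_congr rfl
          intro ω _
          rw [Polynomial.eval_mul, Polynomial.eval_C, Polynomial.eval_pow, Polynomial.eval_X,
            prod_if_insert hn w y (κ ω)]
          ring
        rw [heval]
        apply hstab
        intro i hi
        rcases Finset.mem_insert.mp hi with rfl | hi'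
        · rw [if_pos rfl]; exact hw
        · rw [if_neg (by rintro rfl; exact hn hi')]
          exact hy i hi'
      have hglu := glucas fz hfzdeg hfznv t ht
      have hderiv : (Polynomial.derivative fz).eval t
          = ∑ ω, ((v ω : ℂ) * (κ ω n : ℂ) * t ^ (κ ω n - 1)) * ∏ i ∈ J', y i ^ κ ω i := by
        rw [hfz_def, map_sum, Polynomial.eval_finset_sum]
        apply Finset.sum_congr rfl
        intro ω _
        rw [Polynomial.derivative_C_mul_X_pow, Polynomial.eval_mul, Polynomial.eval_C,
          Polynomial.eval_pow, Polynomial.eval_X]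
        ring
      rw [← hderiv]
      exact hglu
    -- Step B : the new stability
    have hstab' : ∀ x : ι → ℂ, (∀ i ∈ J', 0 < (x i).im) →
        ∑ ω, (v' ω : ℂ) * ∏ i ∈ J', (x i) ^ κ ω i ≠ 0 := by
      have hb1 : (∑ ω, ((v' ω : ℝ) : ℂ)) ≠ 0 := cast_ne v' hsum'pos
      rcases Finset.eq_empty_or_nonempty J' with hJe | hJ'ne
      · intro y _
        subst hJe
        simp only [Finset.prod_empty, mul_one]
        exact hb1
      · intro x hx
        apply hz_line J' hJ'ne κ x hx (fun ω => ((v' ω : ℝ) : ℂ)) hb1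
        intro δ hδ
        have hB3nn : (0:ℝ) ≤ ∑ ω, v ω * (κ ω n : ℝ) :=
          Finset.sum_nonneg fun ω _ => mul_nonneg (hv0 ω) (by positivity)
        set B3 : ℝ := ∑ ω, v ω * (κ ω n : ℝ) with hB3_def
        set ε : ℝ := min 1 (δ / (B3 + 1)) with hε_def
        have hε0 : 0 < ε := lt_min one_pos (by positivity)
        have hε1 : ε ≤ 1 := min_le_left _ _
        have hεB : ε * B3 ≤ δ := by
          calc ε * B3 ≤ (δ / (B3 + 1)) * B3 :=
                mul_le_mul_of_nonneg_right (min_le_right _ _) hB3nn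
            _ ≤ δ := by
                rw [div_mul_eq_mul_div, div_le_iff₀ (by positivity)]
                nlinarith
        refine ⟨fun ω => (v ω : ℂ) * (κ ω n : ℂ) * ((ε:ℂ) * Complex.I) ^ (κ ω n - 1), ?_, ?_⟩
        · intro ω
          dsimp only
          have hbω : ((v' ω : ℝ) : ℂ) = if κ ω n = 1 then (v ω : ℂ) else 0 := by
            simp only [hv'_def]
            by_cases h : κ ω n = 1 <;> simp [h]
          rw [hbω]
          rcases Nat.lt_or_ge (κ ω n) 2 with hk2 | hk2
          · interval_cases h : κ ω n
            · simp
              exact hδ.le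
            · simp
              exact hδ.le
          · have hk1 : κ ω n ≠ 1 := by omega
            rw [if_neg hk1, sub_zero]
            have hnorm : ‖(v ω : ℂ) * (κ ω n : ℂ) * ((ε:ℂ) * Complex.I) ^ (κ ω n - 1)‖
                = v ω * (κ ω n : ℝ) * ε ^ (κ ω n - 1) := by
              rw [norm_mul, norm_mul, norm_pow, norm_mul, Complex.norm_I, mul_one,
                Complex.norm_real, Complex.norm_natCast, Complex.norm_real,
                Real.norm_eq_abs, Real.norm_eq_abs, abs_of_nonneg (hv0 ω), abs_of_pos hε0]
            rw [hnorm]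
            have hεpow : ε ^ (κ ω n - 1) ≤ ε := by
              calc ε ^ (κ ω n - 1) ≤ ε ^ 1 :=
                    pow_le_pow_of_le_one hε0.le hε1 (by omega)
                _ = ε := pow_one ε
            have hvk : v ω * (κ ω n : ℝ) ≤ B3 := by
              rw [hB3_def]
              exact Finset.single_le_sum
                (f := fun ω => v ω * (κ ω n : ℝ))
                (fun ω' _ => mul_nonneg (hv0 ω') (by positivity)) (Finset.mem_univ ω)
            calc v ω * (κ ω n : ℝ) * ε ^ (κ ω n - 1) ≤ B3 * ε := by
                  apply mul_le_mul hvk hεpow (by positivity) hB3nn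
              _ ≤ δ := by rw [mul_comm]; exact hεB
        · intro y hy'
          exact hder y hy' ((ε:ℂ) * Complex.I)
            (by simp [Complex.mul_im, hε0])
    have hihapp := ih v' hv'0 (fun i hi => hd1 i (Finset.mem_insert_of_mem hi))
      (fun ω hω i hi => hdm ω (hv'v ω hω) i (Finset.mem_insert_of_mem hi)) hstab'
      (c * gg (d n)) (mul_pos hc (gg_pos hdn1)) hbound'
    rw [Finset.prod_insert hn]
    have hfinal : ∑ ω ∈ Finset.univ.filter (fun ω => ∀ i ∈ J', κ ω i = 1), v' ω
        = ∑ ω ∈ Finset.univ.filter (fun ω => ∀ i ∈ insert n J', κ ω i = 1), v ω := by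
      rw [Finset.sum_filter, Finset.sum_filter]
      apply Finset.sum_congr rfl
      intro ω _
      simp only [hv'_def]
      by_cases h1 : κ ω n = 1 <;> by_cases h2 : ∀ i ∈ J', κ ω i = 1 <;>
        simp [h1, h2, Finset.forall_mem_insert]
    calc c * (gg (d n) * ∏ i ∈ J', gg (d i)) = (c * gg (d n)) * ∏ i ∈ J', gg (d i) := by ring
      _ ≤ ∑ ω ∈ Finset.univ.filter (fun ω => ∀ i ∈ J', κ ω i = 1), v' ω := hihapp
      _ = _ := hfinal

lemma rpow_finset_sum {x : ℝ} (hx : 0 < x) {Ω : Type*} (s : Finset Ω) (a : Ω → ℝ) :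
    x ^ (∑ ω ∈ s, a ω) = ∏ ω ∈ s, x ^ (a ω) := by
  classical
  induction s using Finset.induction_on with
  | empty => simp
  | @insert b t hb ih => rw [Finset.sum_insert hb, Finset.prod_insert hb, Real.rpow_add hx, ih]

/-- Gurvits-type coefficient bound.  Let `p(x_1, …, x_n)` be the generating polynomial of
a strongly Rayleigh distribution `μ` over multisets of a ground set indexed by `ι`
(outcomes `κ ω : ι → ℕ` with probabilities `w ω`; strong Rayleighness says the generating
polynomial `Σ_ω w ω · Π_i x_i^{κ ω i}` has no zeros with all coordinates of positive
imaginary part), with `E[multiplicity of e_i] = 1` for every `i`.  Then the coefficient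
`p_𝟙` of `x_1 x_2 ⋯ x_n` in `p` satisfies
`p_𝟙 ≥ Π_i d_i·(d_i − 1)^{d_i − 1}/d_i^{d_i}`, where `d_i` is the maximum degree of
`x_i` in `p`. -/
theorem strongly_rayleigh_coefficient_capacity_bound {ι Ω : Type*}
    [Fintype ι] [Fintype Ω] [DecidableEq ι]
    (w : Ω → ℝ) (hw0 : ∀ ω, 0 ≤ w ω) (hw1 : ∑ ω, w ω = 1)
    (κ : Ω → ι → ℕ)
    (hSR : ∀ x : ι → ℂ, (∀ i, 0 < (x i).im) →
      ∑ ω, (w ω : ℂ) * ∏ i, (x i) ^ (κ ω i) ≠ 0)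
    (hE : ∀ i, ∑ ω, w ω * (κ ω i : ℝ) = 1)
    (d : ι → ℕ)
    (hdmax : ∀ i, (∀ ω, w ω ≠ 0 → κ ω i ≤ d i) ∧ ∃ ω, w ω ≠ 0 ∧ κ ω i = d i) :
    (∏ i, (d i : ℝ) * ((d i : ℝ) - 1) ^ (d i - 1) / (d i : ℝ) ^ (d i)) ≤
      ∑ ω ∈ Finset.univ.filter (fun ω => ∀ i, κ ω i = 1), w ω := by
  classical
  have hd1 : ∀ i ∈ (Finset.univ : Finset ι), 1 ≤ d i := by
    intro i _
    have h1 : (∑ ω, w ω * (κ ω i : ℝ)) ≠ 0 := by rw [hE i]; norm_num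
    obtain ⟨ω, _, hω⟩ := Finset.exists_ne_zero_of_sum_ne_zero h1
    have hωw : w ω ≠ 0 := by
      intro h
      rw [h] at hω
      simp at hω
    have hκ : κ ω i ≠ 0 := by
      intro h
      rw [h] at hω
      simp at hω
    have := (hdmax i).1 ω hωw
    omega
  have hbound : ∀ x : ι → ℝ, (∀ i ∈ (Finset.univ : Finset ι), 0 < x i) →
      1 * ∏ i, x i ≤ ∑ ω, w ω * ∏ i, (x i) ^ κ ω i := by
    intro x hx
    rw [one_mul]
    have hgm := Real.geom_mean_le_arith_mean_weighted Finset.univ w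
      (fun ω => ∏ i, (x i) ^ κ ω i) (fun ω _ => hw0 ω) hw1
      (fun ω _ => Finset.prod_nonneg fun i _ => pow_nonneg (hx i (Finset.mem_univ i)).le _)
    refine le_trans (le_of_eq ?_) hgm
    have hxpos : ∀ i, 0 < x i := fun i => hx i (Finset.mem_univ i)
    have hstep : ∀ ω : Ω, (∏ i, (x i) ^ κ ω i) ^ (w ω)
        = ∏ i, (x i) ^ ((κ ω i : ℝ) * w ω) := by
      intro ω
      rw [← Real.finset_prod_rpow Finset.univ _ (fun i _ => pow_nonneg (hxpos i).le _) (w ω)]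
      apply Finset.prod_congr rfl
      intro i _
      rw [← Real.rpow_natCast (x i) (κ ω i), ← Real.rpow_mul (hxpos i).le]
    rw [Finset.prod_congr rfl (fun ω _ => hstep ω), Finset.prod_comm]
    apply Finset.prod_congr rfl
    intro i _
    rw [← rpow_finset_sum (hxpos i)]
    have hsum : ∑ ω, (κ ω i : ℝ) * w ω = 1 := by
      rw [← hE i]
      apply Finset.sum_congr rfl
      intro ω _
      ring
    rw [hsum, Real.rpow_one]
  have hstab : ∀ x : ι → ℂ, (∀ i ∈ (Finset.univ : Finset ι), 0 < (x i).im) →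
      ∑ ω, (w ω : ℂ) * ∏ i ∈ Finset.univ, (x i) ^ κ ω i ≠ 0 := by
    intro x hx
    exact hSR x (fun i => hx i (Finset.mem_univ i))
  have hmain := main_induction κ d Finset.univ w hw0 hd1
    (fun ω hω i _ => (hdmax i).1 ω hω) hstab 1 one_pos hbound
  rw [one_mul] at hmain
  have hL : ∏ i ∈ (Finset.univ : Finset ι), gg (d i)
      = ∏ i, (d i : ℝ) * ((d i : ℝ) - 1) ^ (d i - 1) / (d i : ℝ) ^ (d i) := by
    apply Finset.prod_congr rfl
    intro i _
    rfl
  rw [hL] at hmain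
  refine le_trans hmain (le_of_eq ?_)
  apply Finset.sum_congr _ (fun ω _ => rfl)
  apply Finset.filter_congr
  intro ω _
  simp

end
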